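/- arXiv:2503.08105 — 3 statements merged into one kernel-verified Lean document; each statement's English description precedes it below -/
import Mathlib

section
/- If h and g are holomorphic functions on a domain Ω ⊆ ℂ and the function f(z) = h(z) + conj(g(z)) has the property that f² is harmonic on Ω (i.e. satisfies ∂²(f²)/∂z∂z̄ = 0 on Ω), then either h is constant on Ω or g is constant on Ω. -/
/-!
Write `f = h + conj g`. Since `h` is holomorphic and `conj g` antiholomorphic,
`∂̄(f²) = 2 f conj g'`, and applying `∂` once more gives `∂∂̄(f²) = 2 h' conj g'`.
Harmonicity of `f²` therefore forces `h' g' = 0` on `Ω`; by the identity theorem one of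
the analytic functions `h'`, `g'` vanishes identically on the connected set `Ω`, so `h` or
`g` is constant.
-/

open Complex ComplexConjugate Metric Set

noncomputable def wDz (f : ℂ → ℂ) (z : ℂ) : ℂ :=
  (fderiv ℝ f z 1 - Complex.I * fderiv ℝ f z Complex.I) / 2

noncomputable def wDzbar (f : ℂ → ℂ) (z : ℂ) : ℂ :=
  (fderiv ℝ f z 1 + Complex.I * fderiv ℝ f z Complex.I) / 2

/-- A complex-valued function is harmonic on `Ω` iff its mixed Wirtinger
derivative `∂²/∂z∂z̄` vanishes on `Ω`. -/
def HarmonicOnC (f : ℂ → ℂ) (Ω : Set ℂ) : Prop :=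
  ∀ z ∈ Ω, wDz (wDzbar f) z = 0

/-- `f` is real-differentiable at `z` with Wirtinger derivatives `∂f = a` and `∂̄f = b`. -/
def HasWirtingerDerivAt (f : ℂ → ℂ) (a b z : ℂ) : Prop :=
  HasFDerivAt f (a • ContinuousLinearMap.id ℝ ℂ + b • conjCLE.toContinuousLinearMap) z

namespace HasWirtingerDerivAt

variable {f f₁ f₂ : ℂ → ℂ} {a b a₁ b₁ a₂ b₂ z : ℂ}

theorem wDz_eq (hf : HasWirtingerDerivAt f a b z) : wDz f z = a := by
  rw [wDz, hf.fderiv]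
  simp only [add_apply, smul_apply, ContinuousLinearMap.id_apply,
    ContinuousLinearEquiv.coe_coe, conjCLE_apply, map_one, conj_I, smul_eq_mul]
  linear_combination (b - a) / 2 * I_sq

theorem wDzbar_eq (hf : HasWirtingerDerivAt f a b z) : wDzbar f z = b := by
  rw [wDzbar, hf.fderiv]
  simp only [add_apply, smul_apply, ContinuousLinearMap.id_apply,
    ContinuousLinearEquiv.coe_coe, conjCLE_apply, map_one, conj_I, smul_eq_mul]
  linear_combination (a - b) / 2 * I_sq

theorem congr_of_eventuallyEq (hf : HasWirtingerDerivAt f a b z) (h : f₁ =ᶠ[nhds z] f) :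
    HasWirtingerDerivAt f₁ a b z :=
  HasFDerivAt.congr_of_eventuallyEq hf h

theorem add (hf₁ : HasWirtingerDerivAt f₁ a₁ b₁ z) (hf₂ : HasWirtingerDerivAt f₂ a₂ b₂ z) :
    HasWirtingerDerivAt (fun x => f₁ x + f₂ x) (a₁ + a₂) (b₁ + b₂) z := by
  refine (HasFDerivAt.add hf₁ hf₂).congr_fderiv ?_
  ext1 w; simp only [add_apply, smul_apply, add_smul]; abel

theorem mul (hf₁ : HasWirtingerDerivAt f₁ a₁ b₁ z) (hf₂ : HasWirtingerDerivAt f₂ a₂ b₂ z) :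
    HasWirtingerDerivAt (fun x => f₁ x * f₂ x)
      (a₁ * f₂ z + f₁ z * a₂) (b₁ * f₂ z + f₁ z * b₂) z := by
  refine (HasFDerivAt.mul hf₁ hf₂).congr_fderiv ?_
  ext1 w
  simp only [add_apply, smul_apply, ContinuousLinearMap.id_apply,
    ContinuousLinearEquiv.coe_coe, conjCLE_apply, smul_eq_mul]
  ring

end HasWirtingerDerivAt

theorem hasWirtingerDerivAt_const (c z : ℂ) : HasWirtingerDerivAt (fun _ => c) 0 0 z :=
  (hasFDerivAt_const (𝕜 := ℝ) c z).congr_fderiv (by ext1; simp)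

theorem HasDerivAt.hasWirtingerDerivAt {f : ℂ → ℂ} {a z : ℂ} (hf : HasDerivAt f a z) :
    HasWirtingerDerivAt f a 0 z := by
  refine (hf.hasFDerivAt.restrictScalars ℝ).congr_fderiv ?_
  ext1 w; simp [mul_comm]

theorem HasDerivAt.hasWirtingerDerivAt_conj {f : ℂ → ℂ} {b z : ℂ} (hf : HasDerivAt f b z) :
    HasWirtingerDerivAt (fun x => conj (f x)) 0 (conj b) z := by
  refine (conjCLE.toContinuousLinearMap.hasFDerivAt.comp z
    (hf.hasFDerivAt.restrictScalars ℝ)).congr_fderiv ?_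
  ext1 w; simp [mul_comm]

theorem wDz_wDzbar_sq_add_conj {Ω : Set ℂ} (hΩ : IsOpen Ω) {h g : ℂ → ℂ}
    (hh : DifferentiableOn ℂ h Ω) (hg : DifferentiableOn ℂ g Ω) {z : ℂ} (hz : z ∈ Ω) :
    wDz (wDzbar fun x => (h x + conj (g x)) ^ 2) z = 2 * deriv h z * conj (deriv g z) := by
  have hh' : ∀ x ∈ Ω, HasDerivAt h (deriv h x) x := fun x hx =>
    (hh.differentiableAt (hΩ.mem_nhds hx)).hasDerivAt
  have hg' : ∀ x ∈ Ω, HasDerivAt g (deriv g x) x := fun x hx =>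
    (hg.differentiableAt (hΩ.mem_nhds hx)).hasDerivAt
  have hf : ∀ x ∈ Ω, HasWirtingerDerivAt (fun x => h x + conj (g x))
      (deriv h x) (conj (deriv g x)) x := fun x hx => by
    simpa only [add_zero, zero_add] using
      (hh' x hx).hasWirtingerDerivAt.add (hg' x hx).hasWirtingerDerivAt_conj
  have hwDzbar : wDzbar (fun x => (h x + conj (g x)) ^ 2) =ᶠ[nhds z]
      fun x => 2 * (h x + conj (g x)) * conj (deriv g x) := by
    filter_upwards [hΩ.mem_nhds hz] with x hx
    simp only [sq]
    rw [((hf x hx).mul (hf x hx)).wDzbar_eq]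
    ring
  have hg'' : HasDerivAt (deriv g) (deriv (deriv g) z) z :=
    ((hg.analyticOnNhd hΩ).deriv z hz).differentiableAt.hasDerivAt
  have hG := ((hasWirtingerDerivAt_const 2 z).mul (hf z hz)).mul hg''.hasWirtingerDerivAt_conj
  rw [(hG.congr_of_eventuallyEq hwDzbar).wDz_eq]
  ring

theorem stmt0_general (Ω : Set ℂ) (hop : IsOpen Ω) (hconn : IsConnected Ω)
    (h g : ℂ → ℂ) (hh : DifferentiableOn ℂ h Ω) (hg : DifferentiableOn ℂ g Ω)
    (hharm : HarmonicOnC (fun z => (h z + conj (g z)) ^ 2) Ω) :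
    (∃ c : ℂ, ∀ z ∈ Ω, h z = c) ∨ (∃ c : ℂ, ∀ z ∈ Ω, g z = c) := by
  have hprod : ∀ z ∈ Ω, deriv h z * deriv g z = 0 := fun z hz => by
    simpa [wDz_wDzbar_sq_add_conj hop hh hg hz] using hharm z hz
  refine ((hh.analyticOnNhd hop).deriv.eq_zero_or_eq_zero_of_mul_eq_zero
    (hg.analyticOnNhd hop).deriv hprod hconn.isPreconnected).imp ?_ ?_
  · exact hop.exists_is_const_of_deriv_eq_zero hconn.isPreconnected hh
  · exact hop.exists_is_const_of_deriv_eq_zero hconn.isPreconnected hg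

theorem stmt0 (Ω : Set ℂ) (hne : Ω.Nonempty) (hop : IsOpen Ω) (hconn : IsConnected Ω)
    (h g : ℂ → ℂ) (hh : DifferentiableOn ℂ h Ω) (hg : DifferentiableOn ℂ g Ω)
    (hharm : HarmonicOnC (fun z => (h z + conj (g z)) ^ 2) Ω) :
    (∃ c : ℂ, ∀ z ∈ Ω, h z = c) ∨ (∃ c : ℂ, ∀ z ∈ Ω, g z = c) :=
  stmt0_general Ω hop hconn h g hh hg hharm
end

section
/- There exist holomorphic functions h, g and a non-real constant α ∈ ℂ such that f = h + conj∘g and F = α·h − conj∘(α·g) have opposite dilatations (ω_f = −ω_F) but the product f·F is not harmonic; e.g. h(z) = z, g(z) = z², α = i. -/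
open Complex ComplexConjugate Metric Set

section Wirtinger

variable {f g h₁ g₁ h₂ g₂ : ℂ → ℂ} {z : ℂ}

lemma wDz_add (hf : DifferentiableAt ℝ f z) (hg : DifferentiableAt ℝ g z) :
    wDz (fun w => f w + g w) z = wDz f z + wDz g z := by
  simp only [wDz, fderiv_fun_add hf hg, add_apply]
  ring

lemma wDzbar_add (hf : DifferentiableAt ℝ f z) (hg : DifferentiableAt ℝ g z) :
    wDzbar (fun w => f w + g w) z = wDzbar f z + wDzbar g z := by
  simp only [wDzbar, fderiv_fun_add hf hg, add_apply]
  ring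

lemma wDz_mul (hf : DifferentiableAt ℝ f z) (hg : DifferentiableAt ℝ g z) :
    wDz (fun w => f w * g w) z = f z * wDz g z + wDz f z * g z := by
  simp only [wDz, fderiv_fun_mul hf hg, add_apply, smul_apply, smul_eq_mul]
  ring

lemma wDzbar_mul (hf : DifferentiableAt ℝ f z) (hg : DifferentiableAt ℝ g z) :
    wDzbar (fun w => f w * g w) z = f z * wDzbar g z + wDzbar f z * g z := by
  simp only [wDzbar, fderiv_fun_mul hf hg, add_apply, smul_apply, smul_eq_mul]
  ring

lemma fderiv_conj_apply (v : ℂ) :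
    fderiv ℝ (fun w => conj (f w)) z v = conj (fderiv ℝ f z v) := by
  rw [show (fun w => conj (f w)) = fun w => star (f w) from rfl, fderiv_star]
  rfl

lemma wDz_conj : wDz (fun w => conj (f w)) z = conj (wDzbar f z) := by
  simp only [wDz, wDzbar, fderiv_conj_apply, map_div₀, map_add, map_mul, conj_I, map_ofNat]
  ring

lemma wDzbar_conj : wDzbar (fun w => conj (f w)) z = conj (wDz f z) := by
  simp only [wDz, wDzbar, fderiv_conj_apply, map_div₀, map_sub, map_mul, conj_I, map_ofNat]
  ring

lemma DifferentiableAt.wDz_eq_deriv (hf : DifferentiableAt ℂ f z) : wDz f z = deriv f z := by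
  simp [wDz, hf.fderiv_restrictScalars ℝ]
  linear_combination -deriv f z * I_sq / 2

lemma DifferentiableAt.wDzbar_eq_zero (hf : DifferentiableAt ℂ f z) : wDzbar f z = 0 := by
  simp [wDzbar, hf.fderiv_restrictScalars ℝ]
  linear_combination deriv f z * I_sq

lemma DifferentiableAt.wDz_conj_eq_zero (hf : DifferentiableAt ℂ f z) :
    wDz (fun w => conj (f w)) z = 0 := by
  rw [wDz_conj, hf.wDzbar_eq_zero, map_zero]

lemma DifferentiableAt.conj (hf : DifferentiableAt ℝ f z) :
    DifferentiableAt ℝ (fun w => conj (f w)) z :=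
  hf.star

lemma DifferentiableAt.add_conj (hh : DifferentiableAt ℂ h₁ z) (hg : DifferentiableAt ℂ g₁ z) :
    DifferentiableAt ℝ (fun w => h₁ w + conj (g₁ w)) z :=
  (hh.restrictScalars ℝ).add (hg.restrictScalars ℝ).conj

lemma wDz_add_conj (hh : DifferentiableAt ℂ h₁ z) (hg : DifferentiableAt ℂ g₁ z) :
    wDz (fun w => h₁ w + conj (g₁ w)) z = deriv h₁ z := by
  rw [wDz_add (hh.restrictScalars ℝ) (hg.restrictScalars ℝ).conj, hh.wDz_eq_deriv,
    hg.wDz_conj_eq_zero, add_zero]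

lemma wDzbar_add_conj (hh : DifferentiableAt ℂ h₁ z) (hg : DifferentiableAt ℂ g₁ z) :
    wDzbar (fun w => h₁ w + conj (g₁ w)) z = conj (deriv g₁ z) := by
  rw [wDzbar_add (hh.restrictScalars ℝ) (hg.restrictScalars ℝ).conj, hh.wDzbar_eq_zero,
    wDzbar_conj, hg.wDz_eq_deriv, zero_add]

theorem wDz_wDzbar_add_conj_mul_add_conj (hh₁ : Differentiable ℂ h₁) (hg₁ : Differentiable ℂ g₁)
    (hh₂ : Differentiable ℂ h₂) (hg₂ : Differentiable ℂ g₂) (z : ℂ) :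
    wDz (wDzbar fun w => (h₁ w + conj (g₁ w)) * (h₂ w + conj (g₂ w))) z =
      deriv h₁ z * conj (deriv g₂ z) + deriv h₂ z * conj (deriv g₁ z) := by
  have hbar : wDzbar (fun w => (h₁ w + conj (g₁ w)) * (h₂ w + conj (g₂ w))) = fun w =>
      (h₁ w + conj (g₁ w)) * conj (deriv g₂ w) + conj (deriv g₁ w) * (h₂ w + conj (g₂ w)) := by
    funext w
    rw [wDzbar_mul ((hh₁ w).add_conj (hg₁ w)) ((hh₂ w).add_conj (hg₂ w)),
      wDzbar_add_conj (hh₁ w) (hg₁ w), wDzbar_add_conj (hh₂ w) (hg₂ w)]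
  have hf := (hh₁ z).add_conj (hg₁ z)
  have hF := (hh₂ z).add_conj (hg₂ z)
  have hg₁' := ((hg₁.deriv z).restrictScalars ℝ).conj
  have hg₂' := ((hg₂.deriv z).restrictScalars ℝ).conj
  rw [hbar, wDz_add (hf.fun_mul hg₂') (hg₁'.fun_mul hF), wDz_mul hf hg₂', wDz_mul hg₁' hF,
    wDz_add_conj (hh₁ z) (hg₁ z), wDz_add_conj (hh₂ z) (hg₂ z),
    (hg₁.deriv z).wDz_conj_eq_zero, (hg₂.deriv z).wDz_conj_eq_zero]
  ring

theorem wDz_wDzbar_add_conj_mul_const_mul_sub_conj (hh : Differentiable ℂ h₁)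
    (hg : Differentiable ℂ g₁) (α z : ℂ) :
    wDz (wDzbar fun w => (h₁ w + conj (g₁ w)) * (α * h₁ w - conj (α * g₁ w))) z =
      (α - conj α) * deriv h₁ z * conj (deriv g₁ z) := by
  have hF : (fun w => (h₁ w + conj (g₁ w)) * (α * h₁ w - conj (α * g₁ w))) =
      fun w => (h₁ w + conj (g₁ w)) * (α * h₁ w + conj (-α * g₁ w)) := by
    funext w
    rw [neg_mul, map_neg, sub_eq_add_neg]
  rw [hF, wDz_wDzbar_add_conj_mul_add_conj hh hg (hh.const_mul α) (hg.const_mul (-α)),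
    deriv_const_mul_field, deriv_const_mul_field, map_mul, map_neg]
  ring

end Wirtinger

lemma deriv_div_deriv_eq_neg_const_mul_div {α : ℂ} (hα : α ≠ 0) (h g : ℂ → ℂ) (z : ℂ) :
    deriv g z / deriv h z = -(deriv (fun w => -α * g w) z / deriv (fun w => α * h w) z) := by
  rw [deriv_const_mul_field, deriv_const_mul_field, neg_mul, neg_div, neg_neg,
    mul_div_mul_left _ _ hα]

theorem stmt8 :
    ∃ (h g : ℂ → ℂ) (α : ℂ),
      Differentiable ℂ h ∧ Differentiable ℂ g ∧ α.im ≠ 0 ∧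
      (∀ z : ℂ, deriv g z / deriv h z =
        -(deriv (fun w => -α * g w) z / deriv (fun w => α * h w) z)) ∧
      ¬ HarmonicOnC (fun z => (h z + conj (g z)) * (α * h z - conj (α * g z))) Set.univ := by
  have hh : Differentiable ℂ fun z : ℂ => z := differentiable_id
  have hg : Differentiable ℂ fun z : ℂ => z ^ 2 := differentiable_id.pow 2
  refine ⟨_, _, I, hh, hg, by simp, deriv_div_deriv_eq_neg_const_mul_div I_ne_zero _ _,
    fun hharm => ?_⟩
  have h_one := hharm 1 (mem_univ 1)
  rw [wDz_wDzbar_add_conj_mul_const_mul_sub_conj hh hg] at h_one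
  simp at h_one
end

section
/- Let h, g, H, G be holomorphic on a domain Ω. The product (h + conj∘g)(H + conj∘G) is harmonic on Ω if and only if h'(z)·conj(G'(z)) + H'(z)·conj(g'(z)) = 0 for all z ∈ Ω. -/
/-!
Every function met in the computation has a real derivative of the form `w ↦ a w + b w̄`,
and then `∂f = a`, `∂̄f = b`. For holomorphic `u` this holds with `(u', 0)`, for `conj ∘ u` with
`(0, conj u')`, and the Leibniz rule propagates the form through sums and products. Hence near
every point `∂̄[(h + ḡ)(H + Ḡ)] = (h + ḡ) conj G' + (H + Ḡ) conj g'`, and applying `∂` once more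
(the derivatives `g'`, `G'` are holomorphic again) leaves `h' conj G' + H' conj g'`.
-/

open Complex ComplexConjugate Metric Set

noncomputable def wirtingerCLM (a b : ℂ) : ℂ →L[ℝ] ℂ :=
  a • (ContinuousLinearMap.id ℂ ℂ).restrictScalars ℝ + b • conjCLE.toContinuousLinearMap

@[simp]
lemma wirtingerCLM_apply (a b w : ℂ) : wirtingerCLM a b w = a * w + b * conj w := by
  simp [wirtingerCLM]

section Wirtinger

variable {f k : ℂ → ℂ} {a b c d z : ℂ}

lemma HasFDerivAt.wDz_eq (hf : HasFDerivAt f (wirtingerCLM a b) z) : wDz f z = a := by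
  rw [wDz, hf.fderiv]
  simp only [wirtingerCLM_apply, map_one, conj_I]
  linear_combination (b - a) / 2 * I_sq

lemma HasFDerivAt.wDzbar_eq (hf : HasFDerivAt f (wirtingerCLM a b) z) : wDzbar f z = b := by
  rw [wDzbar, hf.fderiv]
  simp only [wirtingerCLM_apply, map_one, conj_I]
  linear_combination (a - b) / 2 * I_sq

lemma Filter.EventuallyEq.wDz_eq (hfk : f =ᶠ[nhds z] k) : wDz f z = wDz k z := by
  rw [wDz, wDz, hfk.fderiv_eq]

lemma HasDerivAt.hasFDerivAt_wirtingerCLM (hf : HasDerivAt f a z) :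
    HasFDerivAt f (wirtingerCLM a 0) z := by
  refine (hf.hasFDerivAt.restrictScalars ℝ).congr_fderiv (ContinuousLinearMap.ext fun w => ?_)
  simp [mul_comm]

lemma HasDerivAt.hasFDerivAt_conj (hf : HasDerivAt f a z) :
    HasFDerivAt (fun w => conj (f w)) (wirtingerCLM 0 (conj a)) z := by
  refine (conjCLE.toContinuousLinearMap.hasFDerivAt.comp z
    (hf.hasFDerivAt.restrictScalars ℝ)).congr_fderiv (ContinuousLinearMap.ext fun w => ?_)
  simp [mul_comm]

lemma HasFDerivAt.add_wirtingerCLM (hf : HasFDerivAt f (wirtingerCLM a b) z)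
    (hk : HasFDerivAt k (wirtingerCLM c d) z) :
    HasFDerivAt (fun w => f w + k w) (wirtingerCLM (a + c) (b + d)) z := by
  refine (hf.add hk).congr_fderiv (ContinuousLinearMap.ext fun w => ?_)
  simp only [add_apply, wirtingerCLM_apply]
  ring

lemma HasFDerivAt.mul_wirtingerCLM (hf : HasFDerivAt f (wirtingerCLM a b) z)
    (hk : HasFDerivAt k (wirtingerCLM c d) z) :
    HasFDerivAt (fun w => f w * k w) (wirtingerCLM (f z * c + k z * a) (f z * d + k z * b)) z := by
  refine (hf.mul hk).congr_fderiv (ContinuousLinearMap.ext fun w => ?_)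
  simp only [add_apply, smul_apply, wirtingerCLM_apply, smul_eq_mul]
  ring

lemma HasDerivAt.hasFDerivAt_add_conj (hf : HasDerivAt f a z) (hk : HasDerivAt k b z) :
    HasFDerivAt (fun w => f w + conj (k w)) (wirtingerCLM a (conj b)) z := by
  simpa using hf.hasFDerivAt_wirtingerCLM.add_wirtingerCLM hk.hasFDerivAt_conj

end Wirtinger

theorem wDz_wDzbar_mul_add_conj {Ω : Set ℂ} (hΩ : IsOpen Ω) {h g H G : ℂ → ℂ}
    (hh : DifferentiableOn ℂ h Ω) (hg : DifferentiableOn ℂ g Ω)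
    (hH : DifferentiableOn ℂ H Ω) (hG : DifferentiableOn ℂ G Ω) {z : ℂ} (hz : z ∈ Ω) :
    wDz (wDzbar fun w => (h w + conj (g w)) * (H w + conj (G w))) z =
      deriv h z * conj (deriv G z) + deriv H z * conj (deriv g z) := by
  have hasDerivAt {u : ℂ → ℂ} (hu : DifferentiableOn ℂ u Ω) {w : ℂ} (hw : w ∈ Ω) :
      HasDerivAt u (deriv u w) w :=
    (hu.differentiableAt (hΩ.mem_nhds hw)).hasDerivAt
  have hasDerivAt_deriv {u : ℂ → ℂ} (hu : DifferentiableOn ℂ u Ω) :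
      HasDerivAt (deriv u) (deriv (deriv u) z) z :=
    ((hu.analyticOnNhd hΩ).deriv z hz).differentiableAt.hasDerivAt
  have wDzbar_eq : wDzbar (fun w => (h w + conj (g w)) * (H w + conj (G w))) =ᶠ[nhds z]
      fun w => (h w + conj (g w)) * conj (deriv G w) + (H w + conj (G w)) * conj (deriv g w) := by
    filter_upwards [hΩ.mem_nhds hz] with w hw
    exact (((hasDerivAt hh hw).hasFDerivAt_add_conj (hasDerivAt hg hw)).mul_wirtingerCLM
      ((hasDerivAt hH hw).hasFDerivAt_add_conj (hasDerivAt hG hw))).wDzbar_eq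
  rw [wDzbar_eq.wDz_eq]
  have hP := (((hasDerivAt hh hz).hasFDerivAt_add_conj (hasDerivAt hg hz)).mul_wirtingerCLM
      (hasDerivAt_deriv hG).hasFDerivAt_conj).add_wirtingerCLM
    (((hasDerivAt hH hz).hasFDerivAt_add_conj (hasDerivAt hG hz)).mul_wirtingerCLM
      (hasDerivAt_deriv hg).hasFDerivAt_conj)
  rw [hP.wDz_eq]
  ring

theorem stmt16_general (Ω : Set ℂ) (hop : IsOpen Ω)
    (h g H G : ℂ → ℂ) (hh : DifferentiableOn ℂ h Ω) (hg : DifferentiableOn ℂ g Ω)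
    (hH : DifferentiableOn ℂ H Ω) (hG : DifferentiableOn ℂ G Ω) :
    HarmonicOnC (fun z => (h z + conj (g z)) * (H z + conj (G z))) Ω ↔
      ∀ z ∈ Ω, deriv h z * conj (deriv G z) + deriv H z * conj (deriv g z) = 0 :=
  forall₂_congr fun _ hz => by rw [wDz_wDzbar_mul_add_conj hop hh hg hH hG hz]

theorem stmt16 (Ω : Set ℂ) (hop : IsOpen Ω) (hconn : IsConnected Ω)
    (h g H G : ℂ → ℂ) (hh : DifferentiableOn ℂ h Ω) (hg : DifferentiableOn ℂ g Ω)
    (hH : DifferentiableOn ℂ H Ω) (hG : DifferentiableOn ℂ G Ω) :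
    HarmonicOnC (fun z => (h z + conj (g z)) * (H z + conj (G z))) Ω ↔
      ∀ z ∈ Ω, deriv h z * conj (deriv G z) + deriv H z * conj (deriv g z) = 0 :=
  stmt16_general Ω hop h g H G hh hg hH hG
end
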